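/- Let P(x) be a monic polynomial of degree d with non-negative coefficients and P(0)=1, and let P*(x) := x^d·P(1/x). Then lim_{x→∞} L̃_P(x) = lim_{x→∞} L̃_{P*}(x), where L̃_P denotes the Rogers dilogarithm of higher degree. -/

import Mathlib

open Real intervalIntegral

/-- The Rogers dilogarithm of higher degree associated to a function `P`. -/
noncomputable def LP (P : ℝ → ℝ) (x : ℝ) : ℝ :=
  (∫ y in (0:ℝ)..x, Real.log (P y) / y) - (1/2) * Real.log x * Real.log (P x)

/-!
Put `Q := P.reverse`, so that `Q(y) = y ^ d * P(1 / y)` for `y ≠ 0`, and `Q(0) = 1` as `P` is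
monic. Since `log Q(y) = d log y + log P(1 / y)`, differentiating shows that
`F(x) := L̃_P(x) + L̃_Q(1 / x)` is constant on `(0, ∞)`. Both `L̃_P` and `L̃_Q` tend to `0` at
`0⁺`, because `0 ≤ log R(y) ≤ R(y) - 1 = O(y)` there for `R = P, Q`. Hence `F` is both
`lim_∞ L̃_P` (let `x → ∞`) and `lim_∞ L̃_Q` (let `x → 0⁺`).
-/

open Filter MeasureTheory Set Topology Polynomial

section LP

variable {f g : ℝ → ℝ}

theorem LP_congr (h : EqOn f g (Ioi 0)) {x : ℝ} (hx : 0 < x) : LP f x = LP g x := by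
  unfold LP
  congr 1
  · refine integral_congr fun y hy => ?_
    rw [uIcc_of_le hx.le] at hy
    rcases hy.1.eq_or_lt with rfl | hy0
    · simp -- both integrands are `_ / 0 = 0` there
    · simp only [h hy0]
  · rw [h hx]

theorem intervalIntegrable_log_div_self (hf : Measurable f) {b M : ℝ} (hb : 0 ≤ b)
    (hM : ∀ y ∈ Ioc 0 b, |log (f y)| ≤ M * y) :
    IntervalIntegrable (fun y => log (f y) / y) volume 0 b := by
  refine (intervalIntegrable_const (c := M)).mono_fun'
    (hf.log.div measurable_id).aestronglyMeasurable ?_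
  rw [uIoc_of_le hb]
  filter_upwards [ae_restrict_mem measurableSet_Ioc] with y hy
  rw [norm_div, Real.norm_eq_abs, Real.norm_eq_abs, abs_of_pos hy.1, div_le_iff₀ hy.1]
  exact hM y hy

theorem tendsto_LP_nhdsGT_zero {M : ℝ} (hM : ∀ y ∈ Ioc 0 1, |log (f y)| ≤ M * y) :
    Tendsto (LP f) (𝓝[>] 0) (𝓝 0) := by
  have hlin : Tendsto (fun t : ℝ => M * t) (𝓝[>] 0) (𝓝 0) := by
    simpa using ((continuous_const_mul M).tendsto 0).mono_left nhdsWithin_le_nhds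
  have hint : Tendsto (fun t => ∫ y in (0:ℝ)..t, log (f y) / y) (𝓝[>] 0) (𝓝 0) := by
    refine squeeze_zero_norm' ?_ hlin
    filter_upwards [Ioc_mem_nhdsGT one_pos] with t ht
    calc ‖∫ y in (0:ℝ)..t, log (f y) / y‖ ≤ M * |t - 0| := by
          refine norm_integral_le_of_norm_le_const fun y hy => ?_
          rw [uIoc_of_le ht.1.le] at hy
          rw [norm_div, Real.norm_eq_abs, Real.norm_eq_abs, abs_of_pos hy.1, div_le_iff₀ hy.1]
          exact hM y ⟨hy.1, hy.2.trans ht.2⟩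
      _ = M * t := by rw [sub_zero, abs_of_pos ht.1]
  have hbdry : Tendsto (fun t => 1 / 2 * log t * log (f t)) (𝓝[>] 0) (𝓝 0) := by
    refine squeeze_zero_norm' (a := fun t => 1 / 2 * M * |log t * t|) ?_ ?_
    · filter_upwards [Ioc_mem_nhdsGT one_pos] with t ht
      rw [Real.norm_eq_abs, abs_mul, abs_mul, abs_mul, abs_of_pos ht.1, abs_of_pos one_half_pos]
      calc 1 / 2 * |log t| * |log (f t)| ≤ 1 / 2 * |log t| * (M * t) := by
            gcongr; exact hM t ht
        _ = 1 / 2 * M * (|log t| * t) := by ring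
    · simpa using ((tendsto_log_mul_rpow_nhdsGT_zero one_pos).abs.const_mul (1 / 2 * M))
  have h := hint.sub hbdry
  rw [sub_zero] at h
  exact h

theorem hasDerivAt_LP (hf : Measurable f) {x ℓ' : ℝ} (hx : 0 < x)
    (hℓ : HasDerivAt (fun y => log (f y)) ℓ' x)
    (hint : IntervalIntegrable (fun y => log (f y) / y) volume 0 x) :
    HasDerivAt (LP f) ((log (f x) / x - log x * ℓ') / 2) x := by
  have hI : HasDerivAt (fun t => ∫ y in (0:ℝ)..t, log (f y) / y) (log (f x) / x) x :=
    integral_hasDerivAt_right hint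
      (hf.log.div measurable_id).stronglyMeasurable.stronglyMeasurableAtFilter
      (hℓ.continuousAt.div continuousAt_id hx.ne')
  exact (hI.sub (((hasDerivAt_log hx.ne').const_mul (1 / 2)).mul hℓ)).congr_deriv
    (by field_simp; ring)

theorem hasDerivAt_LP_add_LP_inv (hf : Measurable f) (hg : Measurable g) {c x ℓ' : ℝ}
    (hx : 0 < x) (hgf : ∀ y, 0 < y → log (g y) = c * log y + log (f y⁻¹))
    (hℓ : HasDerivAt (fun y => log (f y)) ℓ' x)
    (hfi : IntervalIntegrable (fun y => log (f y) / y) volume 0 x)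
    (hgi : IntervalIntegrable (fun y => log (g y) / y) volume 0 x⁻¹) :
    HasDerivAt (fun t => LP f t + LP g t⁻¹) 0 x := by
  have hxi : 0 < x⁻¹ := inv_pos.2 hx
  have hℓg : HasDerivAt (fun y => log (g y)) (c * x - ℓ' * x ^ 2) x⁻¹ := by
    have h : HasDerivAt (fun y => c * log y + log (f y⁻¹)) (c * (x⁻¹)⁻¹ + ℓ' * -(x⁻¹ ^ 2)⁻¹)
        x⁻¹ :=
      ((hasDerivAt_log hxi.ne').const_mul c).add
        (hℓ.comp_of_eq x⁻¹ (hasDerivAt_inv hxi.ne') (inv_inv x).symm)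
    refine (h.congr_of_eventuallyEq (eventually_of_mem (Ioi_mem_nhds hxi) hgf)).congr_deriv ?_
    field_simp
    ring
  refine ((hasDerivAt_LP hf hx hℓ hfi).add
    ((hasDerivAt_LP hg hxi hℓg hgi).comp x (hasDerivAt_inv hx.ne'))).congr_deriv ?_
  rw [hgf x⁻¹ hxi, inv_inv, log_inv]
  field_simp
  ring

theorem eq_of_tendsto_LP_of_log_eq_log_inv (hf : Measurable f) (hg : Measurable g) {c A B : ℝ}
    (hgf : ∀ y, 0 < y → log (g y) = c * log y + log (f y⁻¹))
    (hℓ : ∀ x, 0 < x → DifferentiableAt ℝ (fun y => log (f y)) x)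
    (hfi : ∀ b, 0 < b → IntervalIntegrable (fun y => log (f y) / y) volume 0 b)
    (hgi : ∀ b, 0 < b → IntervalIntegrable (fun y => log (g y) / y) volume 0 b)
    (hf0 : Tendsto (LP f) (𝓝[>] 0) (𝓝 0)) (hg0 : Tendsto (LP g) (𝓝[>] 0) (𝓝 0))
    (hA : Tendsto (LP f) atTop (𝓝 A)) (hB : Tendsto (LP g) atTop (𝓝 B)) :
    A = B := by
  set F := fun t => LP f t + LP g t⁻¹
  have hF' : ∀ x ∈ Ioi (0 : ℝ), HasDerivAt F 0 x := fun x hx =>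
    hasDerivAt_LP_add_LP_inv hf hg hx hgf (hℓ x hx).hasDerivAt (hfi x hx)
      (hgi x⁻¹ (inv_pos.2 hx))
  have hF : ∀ x ∈ Ioi (0 : ℝ), F x = F 1 := fun x hx =>
    isOpen_Ioi.is_const_of_deriv_eq_zero isPreconnected_Ioi
      (fun t ht => (hF' t ht).differentiableAt.differentiableWithinAt)
      (fun t ht => (hF' t ht).deriv) hx (mem_Ioi.2 one_pos)
  have hFA : Tendsto F atTop (𝓝 (A + 0)) := hA.add (hg0.comp tendsto_inv_atTop_nhdsGT_zero)
  have hFB : Tendsto (fun t => F t⁻¹) atTop (𝓝 (0 + B)) := by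
    refine ((hf0.comp tendsto_inv_atTop_nhdsGT_zero).add hB).congr fun t => ?_
    simp only [F, Function.comp, inv_inv]
  have hA1 : F 1 = A + 0 := tendsto_nhds_unique tendsto_const_nhds <|
    hFA.congr' <| (eventually_gt_atTop 0).mono hF
  have hB1 : F 1 = 0 + B := tendsto_nhds_unique tendsto_const_nhds <|
    hFB.congr' <| (eventually_gt_atTop 0).mono fun t ht => hF t⁻¹ (inv_pos.2 ht)
  linarith

end LP

namespace Polynomial

variable {R : ℝ[X]}

theorem eval_nonneg_of_coeff_nonneg (hc : ∀ i, 0 ≤ R.coeff i) {y : ℝ} (hy : 0 ≤ y) :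
    0 ≤ R.eval y := by
  rw [eval_eq_sum_range]
  exact Finset.sum_nonneg fun i _ => mul_nonneg (hc i) (pow_nonneg hy i)

theorem eval_mono_of_coeff_nonneg (hc : ∀ i, 0 ≤ R.coeff i) {a b : ℝ} (ha : 0 ≤ a)
    (hab : a ≤ b) : R.eval a ≤ R.eval b := by
  rw [eval_eq_sum_range, eval_eq_sum_range]
  exact Finset.sum_le_sum fun i _ =>
    mul_le_mul_of_nonneg_left (pow_le_pow_left₀ ha hab i) (hc i)

theorem eval_eq_one_add_mul_eval_divX (h0 : R.coeff 0 = 1) (y : ℝ) :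
    R.eval y = 1 + y * R.divX.eval y := by
  conv_lhs => rw [← divX_mul_X_add R, h0]
  simp only [eval_add, eval_mul, eval_X, eval_C]
  ring

theorem divX_coeff_nonneg (hc : ∀ i, 0 ≤ R.coeff i) (i : ℕ) : 0 ≤ R.divX.coeff i := by
  rw [coeff_divX]
  exact hc _

theorem one_le_eval_of_coeff_nonneg (hc : ∀ i, 0 ≤ R.coeff i) (h0 : R.coeff 0 = 1) {y : ℝ}
    (hy : 0 ≤ y) : 1 ≤ R.eval y := by
  rw [eval_eq_one_add_mul_eval_divX h0]
  exact le_add_of_nonneg_right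
    (mul_nonneg hy (eval_nonneg_of_coeff_nonneg (divX_coeff_nonneg hc) hy))

theorem abs_log_eval_le (hc : ∀ i, 0 ≤ R.coeff i) (h0 : R.coeff 0 = 1) {b y : ℝ} (hy : 0 ≤ y)
    (hyb : y ≤ b) : |log (R.eval y)| ≤ R.divX.eval b * y := by
  have hR1 := one_le_eval_of_coeff_nonneg hc h0 hy
  rw [abs_of_nonneg (log_nonneg hR1)]
  calc log (R.eval y) ≤ R.eval y - 1 := log_le_sub_one_of_pos (by linarith)
    _ = R.divX.eval y * y := by rw [eval_eq_one_add_mul_eval_divX h0]; ring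
    _ ≤ R.divX.eval b * y := by
      gcongr
      exact eval_mono_of_coeff_nonneg (divX_coeff_nonneg hc) hy hyb

theorem intervalIntegrable_log_eval_div (hc : ∀ i, 0 ≤ R.coeff i) (h0 : R.coeff 0 = 1) {b : ℝ}
    (hb : 0 ≤ b) : IntervalIntegrable (fun y => log (R.eval y) / y) volume 0 b :=
  intervalIntegrable_log_div_self R.continuous.measurable hb fun _ hy =>
    abs_log_eval_le hc h0 hy.1.le hy.2

theorem tendsto_LP_eval_nhdsGT_zero (hc : ∀ i, 0 ≤ R.coeff i) (h0 : R.coeff 0 = 1) :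
    Tendsto (LP fun u => R.eval u) (𝓝[>] 0) (𝓝 0) :=
  tendsto_LP_nhdsGT_zero fun _ hy => abs_log_eval_le hc h0 hy.1.le hy.2

theorem eval_reverse {u : ℝ} (hu : u ≠ 0) :
    R.reverse.eval u = u ^ R.natDegree * R.eval u⁻¹ := by
  have : Invertible u⁻¹ := invertibleOfNonzero (inv_ne_zero hu)
  have h := eval₂_reverse_mul_pow (RingHom.id ℝ) u⁻¹ R
  rw [invOf_eq_inv, inv_inv] at h
  change R.reverse.eval u * u⁻¹ ^ R.natDegree = R.eval u⁻¹ at h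
  rw [← h, inv_pow]
  field_simp

end Polynomial

/-- `lim_{x→∞} L̃_P(x) = lim_{x→∞} L̃_{P*}(x)` where `P*(x) = x^d·P(1/x)`. -/
theorem LP_lim_eq_LP_reverse_lim (d : ℕ) (P : Polynomial ℝ) (hP : P.Monic)
    (hdeg : P.natDegree = d) (hcoeff : ∀ i, 0 ≤ P.coeff i) (h0 : P.coeff 0 = 1)
    (A B : ℝ)
    (hA : Filter.Tendsto (fun t => LP (fun u => P.eval u) t) Filter.atTop (nhds A))
    (hB : Filter.Tendsto (fun t => LP (fun u => u ^ d * P.eval u⁻¹) t) Filter.atTop (nhds B)) :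
    A = B := by
  set Q := P.reverse
  have hQc : ∀ i, 0 ≤ Q.coeff i := fun i => by rw [coeff_reverse]; exact hcoeff _
  have hQ0 : Q.coeff 0 = 1 := by rw [coeff_zero_reverse]; exact hP
  have hQ : ∀ y, 0 < y → Q.eval y = y ^ d * P.eval y⁻¹ := fun y hy =>
    hdeg ▸ eval_reverse hy.ne'
  have hPpos : ∀ y, 0 < y → 0 < P.eval y := fun y hy =>
    one_pos.trans_le (one_le_eval_of_coeff_nonneg hcoeff h0 hy.le)
  have hBQ : Tendsto (LP fun u => Q.eval u) atTop (𝓝 B) :=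
    hB.congr' <| (eventually_gt_atTop 0).mono fun t ht =>
      LP_congr (fun y hy => (hQ y hy).symm) ht
  refine eq_of_tendsto_LP_of_log_eq_log_inv P.continuous.measurable Q.continuous.measurable
    (c := d) (fun y hy => ?_) (fun x hx => P.differentiableAt.log (hPpos x hx).ne')
    (fun b hb => intervalIntegrable_log_eval_div hcoeff h0 hb.le)
    (fun b hb => intervalIntegrable_log_eval_div hQc hQ0 hb.le)
    (tendsto_LP_eval_nhdsGT_zero hcoeff h0) (tendsto_LP_eval_nhdsGT_zero hQc hQ0) hA hBQ
  rw [hQ y hy, log_mul (by positivity) (hPpos _ (inv_pos.2 hy)).ne', log_pow]
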